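/- arXiv:1605.09726 — 8 statements merged into one kernel-verified Lean document; each statement's English description precedes it below -/
import Mathlib

section
/- (Realization lemma.) Let M be a pointwise finite-dimensional persistence bimodule over ℝ², let c be a horizontal cut, and let t ∈ ℝ². (i) If t₁ ∈ c⁺, then there exists x' ∈ c⁺ with x' ≤ t₁ such that Im⁺_{c,t} = Im ρ_{(x,t₂)}^t for every x ∈ c⁺ with x ≤ x'; and if c⁻ ≠ ∅, there exists x'' ∈ c⁻ such that Im⁻_{c,t} = Im ρ_{(x,t₂)}^t for every x ∈ c⁻ with x ≥ x''. (ii) If t₁ ∈ c⁻, then there exists x' ∈ c⁻ with x' ≥ t₁ such that Ker⁻_{c,t} = Ker ρ_t^{(x,t₂)} for every x ∈ c⁻ with x ≥ x'; and if c⁺ ≠ ∅, there exists x'' ∈ c⁺ such that Ker⁺_{c,t} = Ker ρ_t^{(x,t₂)} for every x ∈ c⁺ with x ≤ x''. -/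
attribute [local instance] Classical.propDecidable
set_option linter.unusedVariables false

/-- A persistence module over a preorder `P` with coefficients in a field `k`. -/
structure PersMod (P : Type) [Preorder P] (k : Type) [Field k] where
  space : P → Type
  [isAddCommGroup : ∀ p, AddCommGroup (space p)]
  [isModule : ∀ p, Module k (space p)]
  map : ∀ {s t : P}, s ≤ t → (space s →ₗ[k] space t)
  map_refl : ∀ t : P, map (le_refl t) = LinearMap.id
  map_trans : ∀ {s t u : P} (h₁ : s ≤ t) (h₂ : t ≤ u),
    map (h₁.trans h₂) = (map h₂).comp (map h₁)

attribute [instance] PersMod.isAddCommGroup PersMod.isModule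

variable {P : Type} [Preorder P] {k : Type} [Field k]

/-- Pointwise finite-dimensionality. -/
def PersMod.pfd (M : PersMod P k) : Prop := ∀ t : P, FiniteDimensional k (M.space t)

/-- Isomorphism of persistence modules: a family of linear equivalences commuting
with the structure maps. -/
def PersMod.Iso (M N : PersMod P k) : Prop :=
  ∃ e : ∀ t : P, M.space t ≃ₗ[k] N.space t,
    ∀ {s t : P} (h : s ≤ t) (x : M.space s), e t (M.map h x) = N.map h (e s x)

/-- A cut of a linearly ordered set: a partition into a lower part and an
upward-closed upper part. -/
structure Cut (α : Type) [LinearOrder α] where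
  neg : Set α
  pos : Set α
  union_eq : neg ∪ pos = Set.univ
  inter_eq : neg ∩ pos = ∅
  lt : ∀ x ∈ neg, ∀ y ∈ pos, x < y

variable {α : Type} [LinearOrder α]

lemma Cut.mem_pos_of_le (c : Cut α) {x y : α} (hx : x ∈ c.pos) (h : x ≤ y) : y ∈ c.pos := by
  have hy : y ∈ c.neg ∪ c.pos := c.union_eq ▸ Set.mem_univ y
  rcases hy with hy | hy
  · exact absurd h (not_le.mpr (c.lt y hy x hx))
  · exact hy

lemma Cut.mem_neg_of_le (c : Cut α) {x y : α} (hx : x ∈ c.neg) (h : y ≤ x) : y ∈ c.neg := by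
  have hy : y ∈ c.neg ∪ c.pos := c.union_eq ▸ Set.mem_univ y
  rcases hy with hy | hy
  · exact hy
  · exact absurd h (not_le.mpr (c.lt x hx y hy))

/-- Exactness of a persistence bimodule. -/
def IsExactBimod {α β : Type} [Preorder α] [Preorder β] {k : Type} [Field k]
    (M : PersMod (α × β) k) : Prop :=
  ∀ (s t : α × β) (h : s ≤ t),
    ∀ (y : M.space (t.1, s.2)) (z : M.space (s.1, t.2)),
      (M.map (show (t.1, s.2) ≤ t from ⟨le_rfl, h.2⟩) y =
        M.map (show (s.1, t.2) ≤ t from ⟨h.1, le_rfl⟩) z) ↔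
      ∃ x : M.space s,
        M.map (show s ≤ (t.1, s.2) from ⟨h.1, le_rfl⟩) x = y ∧
        M.map (show s ≤ (s.1, t.2) from ⟨le_rfl, h.2⟩) x = z

variable {k : Type} [Field k]

/-- `Im⁻_{c,t}` for a horizontal cut `c` with `t₁ ∈ c⁺`: the union of the images of the
maps coming from points `(x, t₂)` with `x ∈ c⁻`. -/
noncomputable def ImNegH (M : PersMod (ℝ × ℝ) k) (c : Cut ℝ) (t : ℝ × ℝ)
    (ht : t.1 ∈ c.pos) : Submodule k (M.space t) :=
  ⨆ x : c.neg, LinearMap.range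
    (M.map (show ((x : ℝ), t.2) ≤ t from ⟨(c.lt x x.2 t.1 ht).le, le_rfl⟩))

/-- `Im⁺_{c,t}` for a horizontal cut `c` with `t₁ ∈ c⁺`: the intersection of the images
of the maps coming from points `(x, t₂)` with `x ∈ c⁺`, `x ≤ t₁`. -/
noncomputable def ImPosH (M : PersMod (ℝ × ℝ) k) (c : Cut ℝ) (t : ℝ × ℝ)
    (ht : t.1 ∈ c.pos) : Submodule k (M.space t) :=
  ⨅ x : {x : ℝ // x ∈ c.pos ∧ x ≤ t.1}, LinearMap.range
    (M.map (show ((x : ℝ), t.2) ≤ t from ⟨x.2.2, le_rfl⟩))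

/-- `Ker⁻_{c,t}` for a horizontal cut `c` with `t₁ ∈ c⁻`: the union of the kernels of
the maps to points `(x, t₂)` with `x ∈ c⁻`, `t₁ ≤ x`. -/
noncomputable def KerNegH (M : PersMod (ℝ × ℝ) k) (c : Cut ℝ) (t : ℝ × ℝ)
    (ht : t.1 ∈ c.neg) : Submodule k (M.space t) :=
  ⨆ x : {x : ℝ // x ∈ c.neg ∧ t.1 ≤ x}, LinearMap.ker
    (M.map (show t ≤ ((x : ℝ), t.2) from ⟨x.2.2, le_rfl⟩))

/-- `Ker⁺_{c,t}` for a horizontal cut `c` with `t₁ ∈ c⁻`: the intersection of the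
kernels of the maps to points `(x, t₂)` with `x ∈ c⁺`. -/
noncomputable def KerPosH (M : PersMod (ℝ × ℝ) k) (c : Cut ℝ) (t : ℝ × ℝ)
    (ht : t.1 ∈ c.neg) : Submodule k (M.space t) :=
  ⨅ x : c.pos, LinearMap.ker
    (M.map (show t ≤ ((x : ℝ), t.2) from ⟨(c.lt t.1 ht x x.2).le, le_rfl⟩))

/-- `Im⁻_{d,t}` for a vertical cut `d` with `t₂ ∈ d⁺`. -/
noncomputable def ImNegV (M : PersMod (ℝ × ℝ) k) (d : Cut ℝ) (t : ℝ × ℝ)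
    (ht : t.2 ∈ d.pos) : Submodule k (M.space t) :=
  ⨆ y : d.neg, LinearMap.range
    (M.map (show (t.1, (y : ℝ)) ≤ t from ⟨le_rfl, (d.lt y y.2 t.2 ht).le⟩))

/-- `Im⁺_{d,t}` for a vertical cut `d` with `t₂ ∈ d⁺`. -/
noncomputable def ImPosV (M : PersMod (ℝ × ℝ) k) (d : Cut ℝ) (t : ℝ × ℝ)
    (ht : t.2 ∈ d.pos) : Submodule k (M.space t) :=
  ⨅ y : {y : ℝ // y ∈ d.pos ∧ y ≤ t.2}, LinearMap.range
    (M.map (show (t.1, (y : ℝ)) ≤ t from ⟨le_rfl, y.2.2⟩))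

/-- `Ker⁻_{d,t}` for a vertical cut `d` with `t₂ ∈ d⁻`. -/
noncomputable def KerNegV (M : PersMod (ℝ × ℝ) k) (d : Cut ℝ) (t : ℝ × ℝ)
    (ht : t.2 ∈ d.neg) : Submodule k (M.space t) :=
  ⨆ y : {y : ℝ // y ∈ d.neg ∧ t.2 ≤ y}, LinearMap.ker
    (M.map (show t ≤ (t.1, (y : ℝ)) from ⟨le_rfl, y.2.2⟩))

/-- `Ker⁺_{d,t}` for a vertical cut `d` with `t₂ ∈ d⁻`. -/
noncomputable def KerPosV (M : PersMod (ℝ × ℝ) k) (d : Cut ℝ) (t : ℝ × ℝ)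
    (ht : t.2 ∈ d.neg) : Submodule k (M.space t) :=
  ⨅ y : d.pos, LinearMap.ker
    (M.map (show t ≤ (t.1, (y : ℝ)) from ⟨le_rfl, (d.lt t.2 ht y y.2).le⟩))

section RealizationHelpers

variable {k : Type} [Field k]

lemma range_mono_aux (M : PersMod (ℝ × ℝ) k) {s u t : ℝ × ℝ}
    (hsu : s ≤ u) (hst : s ≤ t) (hut : u ≤ t) :
    LinearMap.range (M.map hst) ≤ LinearMap.range (M.map hut) := by
  have h : M.map hst = (M.map hut).comp (M.map hsu) := M.map_trans hsu hut
  rw [h]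
  exact LinearMap.range_comp_le_range _ _

lemma ker_mono_aux (M : PersMod (ℝ × ℝ) k) {t u v : ℝ × ℝ}
    (htu : t ≤ u) (huv : u ≤ v) (htv : t ≤ v) :
    LinearMap.ker (M.map htu) ≤ LinearMap.ker (M.map htv) := by
  have h : M.map htv = (M.map huv).comp (M.map htu) := M.map_trans htu huv
  rw [h]
  exact LinearMap.ker_le_ker_comp _ _

lemma exists_argmax_finrank {ι V : Type} [Nonempty ι] [AddCommGroup V] [Module k V]
    [FiniteDimensional k V] (F : ι → Submodule k V) :
    ∃ i₀, ∀ j, Module.finrank k (F j) ≤ Module.finrank k (F i₀) := by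
  have hne : (Set.range fun i => Module.finrank k (F i)).Nonempty := Set.range_nonempty _
  have hbdd : BddAbove (Set.range fun i => Module.finrank k (F i)) :=
    ⟨Module.finrank k V, by rintro n ⟨i, rfl⟩; exact Submodule.finrank_le _⟩
  obtain ⟨i₀, hi₀⟩ := Nat.sSup_mem hne hbdd
  exact ⟨i₀, fun j => le_of_le_of_eq (le_csSup hbdd ⟨j, rfl⟩) hi₀.symm⟩

lemma exists_argmin_finrank {ι V : Type} [Nonempty ι] [AddCommGroup V] [Module k V]
    [FiniteDimensional k V] (F : ι → Submodule k V) :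
    ∃ i₀, ∀ j, Module.finrank k (F i₀) ≤ Module.finrank k (F j) := by
  have hne : (Set.range fun i => Module.finrank k (F i)).Nonempty := Set.range_nonempty _
  obtain ⟨i₀, hi₀⟩ := Nat.sInf_mem hne
  exact ⟨i₀, fun j => le_of_eq_of_le hi₀ (Nat.sInf_le ⟨j, rfl⟩)⟩

lemma sup_realized {ι V : Type} [Nonempty ι] [AddCommGroup V] [Module k V]
    [FiniteDimensional k V] (F : ι → Submodule k V)
    (hdir : ∀ i j, ∃ m, F i ≤ F m ∧ F j ≤ F m) :
    ∃ i₀, ∀ j, F i₀ ≤ F j → (⨆ i, F i) = F j := by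
  obtain ⟨i₀, hmax⟩ := exists_argmax_finrank F
  refine ⟨i₀, fun j hij => ?_⟩
  have hji : F i₀ = F j := Submodule.eq_of_le_of_finrank_le hij (hmax j)
  refine le_antisymm (iSup_le fun z => ?_) (le_iSup F j)
  obtain ⟨m, hzm, him⟩ := hdir z i₀
  have hm : F i₀ = F m := Submodule.eq_of_le_of_finrank_le him (hmax m)
  exact hzm.trans (le_of_eq (hm.symm.trans hji))

lemma inf_realized {ι V : Type} [Nonempty ι] [AddCommGroup V] [Module k V]
    [FiniteDimensional k V] (F : ι → Submodule k V)
    (hdir : ∀ i j, ∃ m, F m ≤ F i ∧ F m ≤ F j) :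
    ∃ i₀, ∀ j, F j ≤ F i₀ → (⨅ i, F i) = F j := by
  obtain ⟨i₀, hmin⟩ := exists_argmin_finrank F
  refine ⟨i₀, fun j hij => ?_⟩
  have hji : F j = F i₀ := Submodule.eq_of_le_of_finrank_le hij (hmin j)
  refine le_antisymm (iInf_le F j) (le_iInf fun z => ?_)
  obtain ⟨m, hzm, him⟩ := hdir z i₀
  have hm : F m = F i₀ := Submodule.eq_of_le_of_finrank_le him (hmin m)
  exact (le_of_eq (hji.trans hm.symm)).trans hzm

end RealizationHelpers

/-- **Realization lemma.** For a pfd persistence bimodule over `ℝ²` and a horizontal cut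
`c`: (i) if `t₁ ∈ c⁺` then `Im⁺_{c,t}` is realized as the image from `(x, t₂)` for all
small enough `x ∈ c⁺`, and (if `c⁻ ≠ ∅`) `Im⁻_{c,t}` is realized as the image from
`(x, t₂)` for all large enough `x ∈ c⁻`; (ii) if `t₁ ∈ c⁻` then `Ker⁻_{c,t}` is realized
as the kernel towards `(x, t₂)` for all large enough `x ∈ c⁻`, and (if `c⁺ ≠ ∅`)
`Ker⁺_{c,t}` is realized as the kernel towards `(x, t₂)` for all small enough `x ∈ c⁺`. -/
theorem realization_lemma {k : Type} [Field k] (M : PersMod (ℝ × ℝ) k) (hpfd : M.pfd)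
    (c : Cut ℝ) (t : ℝ × ℝ) :
    (∀ ht : t.1 ∈ c.pos,
      (∃ x' ∈ c.pos, ∃ hx' : x' ≤ t.1, ∀ x, ∀ hx : x ∈ c.pos, ∀ hxx' : x ≤ x',
        ImPosH M c t ht = LinearMap.range
          (M.map (show ((x : ℝ), t.2) ≤ t from ⟨hxx'.trans hx', le_rfl⟩))) ∧
      (c.neg.Nonempty → ∃ x'' ∈ c.neg, ∀ x, ∀ hx : x ∈ c.neg, x'' ≤ x →
        ImNegH M c t ht = LinearMap.range
          (M.map (show ((x : ℝ), t.2) ≤ t from ⟨(c.lt x hx t.1 ht).le, le_rfl⟩)))) ∧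
    (∀ ht : t.1 ∈ c.neg,
      (∃ x' ∈ c.neg, ∃ hx' : t.1 ≤ x', ∀ x, ∀ hx : x ∈ c.neg, ∀ hx'x : x' ≤ x,
        KerNegH M c t ht = LinearMap.ker
          (M.map (show t ≤ ((x : ℝ), t.2) from ⟨hx'.trans hx'x, le_rfl⟩))) ∧
      (c.pos.Nonempty → ∃ x'' ∈ c.pos, ∀ x, ∀ hx : x ∈ c.pos, x ≤ x'' →
        KerPosH M c t ht = LinearMap.ker
          (M.map (show t ≤ ((x : ℝ), t.2) from ⟨(c.lt t.1 ht x hx).le, le_rfl⟩)))) := by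
  haveI : FiniteDimensional k (M.space t) := hpfd t
  constructor
  · intro ht
    constructor
    · -- Im⁺ realized
      haveI : Nonempty {x : ℝ // x ∈ c.pos ∧ x ≤ t.1} := ⟨⟨t.1, ht, le_rfl⟩⟩
      obtain ⟨i₀, hi₀⟩ := inf_realized
        (fun x : {x : ℝ // x ∈ c.pos ∧ x ≤ t.1} =>
          LinearMap.range (M.map (show ((x : ℝ), t.2) ≤ t from ⟨x.2.2, le_rfl⟩)))
        (fun i j => by
          rcases le_total i.1 j.1 with h | h
          · exact ⟨i, le_rfl, range_mono_aux M
              (show ((i : ℝ), t.2) ≤ ((j : ℝ), t.2) from ⟨h, le_rfl⟩) _ _⟩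
          · exact ⟨j, range_mono_aux M
              (show ((j : ℝ), t.2) ≤ ((i : ℝ), t.2) from ⟨h, le_rfl⟩) _ _, le_rfl⟩)
      refine ⟨i₀.1, i₀.2.1, i₀.2.2, fun x hx hxx' => ?_⟩
      exact hi₀ ⟨x, hx, hxx'.trans i₀.2.2⟩
        (range_mono_aux M (show ((x : ℝ), t.2) ≤ ((i₀ : ℝ), t.2) from ⟨hxx', le_rfl⟩) _ _)
    · -- Im⁻ realized
      intro hne
      haveI : Nonempty c.neg := ⟨⟨hne.choose, hne.choose_spec⟩⟩
      obtain ⟨i₀, hi₀⟩ := sup_realized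
        (fun x : c.neg =>
          LinearMap.range (M.map (show ((x : ℝ), t.2) ≤ t from ⟨(c.lt x x.2 t.1 ht).le, le_rfl⟩)))
        (fun i j => by
          rcases le_total i.1 j.1 with h | h
          · exact ⟨j, range_mono_aux M
              (show ((i : ℝ), t.2) ≤ ((j : ℝ), t.2) from ⟨h, le_rfl⟩) _ _, le_rfl⟩
          · exact ⟨i, le_rfl, range_mono_aux M
              (show ((j : ℝ), t.2) ≤ ((i : ℝ), t.2) from ⟨h, le_rfl⟩) _ _⟩)
      refine ⟨i₀.1, i₀.2, fun x hx hxx' => ?_⟩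
      exact hi₀ ⟨x, hx⟩
        (range_mono_aux M (show ((i₀ : ℝ), t.2) ≤ ((x : ℝ), t.2) from ⟨hxx', le_rfl⟩) _ _)
  · intro ht
    constructor
    · -- Ker⁻ realized
      haveI : Nonempty {x : ℝ // x ∈ c.neg ∧ t.1 ≤ x} := ⟨⟨t.1, ht, le_rfl⟩⟩
      obtain ⟨i₀, hi₀⟩ := sup_realized
        (fun x : {x : ℝ // x ∈ c.neg ∧ t.1 ≤ x} =>
          LinearMap.ker (M.map (show t ≤ ((x : ℝ), t.2) from ⟨x.2.2, le_rfl⟩)))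
        (fun i j => by
          rcases le_total i.1 j.1 with h | h
          · exact ⟨j, ker_mono_aux M _
              (show ((i : ℝ), t.2) ≤ ((j : ℝ), t.2) from ⟨h, le_rfl⟩) _, le_rfl⟩
          · exact ⟨i, le_rfl, ker_mono_aux M _
              (show ((j : ℝ), t.2) ≤ ((i : ℝ), t.2) from ⟨h, le_rfl⟩) _⟩)
      refine ⟨i₀.1, i₀.2.1, i₀.2.2, fun x hx hxx' => ?_⟩
      exact hi₀ ⟨x, hx, i₀.2.2.trans hxx'⟩
        (ker_mono_aux M _ (show ((i₀ : ℝ), t.2) ≤ ((x : ℝ), t.2) from ⟨hxx', le_rfl⟩) _)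
    · -- Ker⁺ realized
      intro hne
      haveI : Nonempty c.pos := ⟨⟨hne.choose, hne.choose_spec⟩⟩
      obtain ⟨i₀, hi₀⟩ := inf_realized
        (fun x : c.pos =>
          LinearMap.ker (M.map (show t ≤ ((x : ℝ), t.2) from ⟨(c.lt t.1 ht x x.2).le, le_rfl⟩)))
        (fun i j => by
          rcases le_total i.1 j.1 with h | h
          · exact ⟨i, le_rfl, ker_mono_aux M _
              (show ((i : ℝ), t.2) ≤ ((j : ℝ), t.2) from ⟨h, le_rfl⟩) _⟩
          · exact ⟨j, ker_mono_aux M _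
              (show ((j : ℝ), t.2) ≤ ((i : ℝ), t.2) from ⟨h, le_rfl⟩) _, le_rfl⟩)
      refine ⟨i₀.1, i₀.2, fun x hx hxx' => ?_⟩
      exact hi₀ ⟨x, hx⟩
        (ker_mono_aux M _ (show ((x : ℝ), t.2) ≤ ((i₀ : ℝ), t.2) from ⟨hxx', le_rfl⟩) _)
end

section
/- Let M be an exact pointwise finite-dimensional persistence bimodule over ℝ², and let S be a birth-quadrant shape given by a horizontal cut l and a vertical cut v with l⁻ ≠ ∅ and v⁻ ≠ ∅ (i.e., the left and bottom boundaries of supp(S) = l⁺ × v⁺ do not lie at infinity). Then for every t ∈ supp(S): Im⁺_{S,t} ∩ Ker⁻_{S,t} ⊆ Im⁻_{S,t}. -/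
attribute [local instance] Classical.propDecidable
set_option linter.unusedVariables false

variable {P : Type} [Preorder P] {k : Type} [Field k]

variable {α : Type} [LinearOrder α]

variable {k : Type} [Field k]

lemma PersMod.map_map {P : Type} [Preorder P] {k : Type} [Field k] (M : PersMod P k)
    {a b c : P} (h₁ : a ≤ b) (h₂ : b ≤ c) (x : M.space a) :
    M.map h₂ (M.map h₁ x) = M.map (h₁.trans h₂) x := by
  rw [M.map_trans h₁ h₂]; rfl

lemma PersMod.map_factor {P : Type} [Preorder P] {k : Type} [Field k] (M : PersMod P k)
    {a b c : P} (h₁ : a ≤ b) (h₂ : b ≤ c) (h : a ≤ c) (x : M.space a) :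
    M.map h x = M.map h₂ (M.map h₁ x) := (M.map_map h₁ h₂ x).symm

lemma PersMod.range_le_range {P : Type} [Preorder P] {k : Type} [Field k] (M : PersMod P k)
    {a b c : P} (h₁ : a ≤ b) (h₂ : b ≤ c) :
    LinearMap.range (M.map (h₁.trans h₂)) ≤ LinearMap.range (M.map h₂) := by
  rintro v ⟨w, rfl⟩
  exact ⟨M.map h₁ w, M.map_map h₁ h₂ w⟩

lemma PersMod.ker_le_ker {P : Type} [Preorder P] {k : Type} [Field k] (M : PersMod P k)
    {a b c : P} (h₁ : a ≤ b) (h₂ : b ≤ c) :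
    LinearMap.ker (M.map h₁) ≤ LinearMap.ker (M.map (h₁.trans h₂)) := by
  intro w hw
  have : M.map (h₁.trans h₂) w = 0 := by
    rw [← M.map_map h₁ h₂, LinearMap.mem_ker.mp hw, map_zero]
  exact this

lemma exists_min_submodule {k : Type} [Field k] {V : Type} [AddCommGroup V] [Module k V]
    [FiniteDimensional k V] {ι : Type} [Nonempty ι] (N : ι → Submodule k V)
    (hchain : ∀ i j, N i ≤ N j ∨ N j ≤ N i) : ∃ i₀, ∀ j, N i₀ ≤ N j := by
  obtain ⟨i₀, hi₀⟩ := Nat.sInf_mem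
    (Set.range_nonempty (fun i => Module.finrank k (N i)))
  refine ⟨i₀, fun j => ?_⟩
  rcases hchain i₀ j with h | h
  · exact h
  · have hle : Module.finrank k (N i₀) ≤ Module.finrank k (N j) := by
      exact le_trans (le_of_eq hi₀) (Nat.sInf_le ⟨j, rfl⟩)
    exact le_of_eq (Submodule.eq_of_le_of_finrank_le h hle).symm


/-- For an exact pfd persistence bimodule over `ℝ²` and a birth quadrant with support
`l⁺ × v⁺` whose left and bottom boundaries do not lie at infinity (`l⁻ ≠ ∅ ≠ v⁻`),
for every `t` in the support we have `Im⁺_{S,t} ∩ Ker⁻_{S,t} ⊆ Im⁻_{S,t}`, where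
`Ker⁻_{S,t}` is the sum of the eventual horizontal and vertical kernels at `t`. -/
theorem birth_quadrant_imPos_inf_kerNeg_le_imNeg {k : Type} [Field k]
    (M : PersMod (ℝ × ℝ) k) (hpfd : M.pfd) (hex : IsExactBimod M)
    (l v : Cut ℝ) (hl : l.neg.Nonempty) (hv : v.neg.Nonempty)
    (t : ℝ × ℝ) (ht1 : t.1 ∈ l.pos) (ht2 : t.2 ∈ v.pos) :
    (ImPosH M l t ht1 ⊓ ImPosV M v t ht2) ⊓
      ((⨆ x : {x : ℝ // t.1 ≤ x}, LinearMap.ker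
          (M.map (show t ≤ ((x : ℝ), t.2) from ⟨x.2, le_rfl⟩))) ⊔
        (⨆ y : {y : ℝ // t.2 ≤ y}, LinearMap.ker
          (M.map (show t ≤ (t.1, (y : ℝ)) from ⟨le_rfl, y.2⟩)))) ≤
    ImNegH M l t ht1 ⊓ ImPosV M v t ht2 ⊔ ImNegV M v t ht2 ⊓ ImPosH M l t ht1 := by
  classical
  haveI : FiniteDimensional k (M.space t) := hpfd t
  obtain ⟨xm, hxm⟩ := hl
  obtain ⟨ym, hym⟩ := hv
  rintro u ⟨⟨huH, huV⟩, huK⟩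
  haveI hne1 : Nonempty {x : ℝ // x ∈ l.pos ∧ x ≤ t.1} := ⟨⟨t.1, ht1, le_rfl⟩⟩
  haveI hne2 : Nonempty {y : ℝ // y ∈ v.pos ∧ y ≤ t.2} := ⟨⟨t.2, ht2, le_rfl⟩⟩
  -- stabilization of ImPosH
  obtain ⟨x₀, hx₀min⟩ := exists_min_submodule
    (fun x : {x : ℝ // x ∈ l.pos ∧ x ≤ t.1} =>
      LinearMap.range (M.map (show ((x : ℝ), t.2) ≤ t from ⟨x.2.2, le_rfl⟩)))
    (fun i j => by
      rcases le_total (i : ℝ) (j : ℝ) with h | h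
      · exact Or.inl (M.range_le_range
          (show ((i : ℝ), t.2) ≤ ((j : ℝ), t.2) from ⟨h, le_rfl⟩)
          (show (((j : ℝ), t.2) : ℝ × ℝ) ≤ t from ⟨j.2.2, le_rfl⟩))
      · exact Or.inr (M.range_le_range
          (show ((j : ℝ), t.2) ≤ ((i : ℝ), t.2) from ⟨h, le_rfl⟩)
          (show (((i : ℝ), t.2) : ℝ × ℝ) ≤ t from ⟨i.2.2, le_rfl⟩)))
  obtain ⟨y₀, hy₀min⟩ := exists_min_submodule
    (fun y : {y : ℝ // y ∈ v.pos ∧ y ≤ t.2} =>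
      LinearMap.range (M.map (show (t.1, (y : ℝ)) ≤ t from ⟨le_rfl, y.2.2⟩)))
    (fun i j => by
      rcases le_total (i : ℝ) (j : ℝ) with h | h
      · exact Or.inl (M.range_le_range
          (show (t.1, (i : ℝ)) ≤ (t.1, (j : ℝ)) from ⟨le_rfl, h⟩)
          (show ((t.1, (j : ℝ)) : ℝ × ℝ) ≤ t from ⟨le_rfl, j.2.2⟩))
      · exact Or.inr (M.range_le_range
          (show (t.1, (j : ℝ)) ≤ (t.1, (i : ℝ)) from ⟨le_rfl, h⟩)
          (show ((t.1, (i : ℝ)) : ℝ × ℝ) ≤ t from ⟨le_rfl, i.2.2⟩)))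
  set a0 : ℝ := (x₀ : ℝ) with ha0
  set b0 : ℝ := (y₀ : ℝ) with hb0
  have hx₀le : a0 ≤ t.1 := x₀.2.2
  have hy₀le : b0 ≤ t.2 := y₀.2.2
  have hImH : LinearMap.range (M.map (show (a0, t.2) ≤ t from ⟨hx₀le, le_rfl⟩)) ≤
      ImPosH M l t ht1 := le_iInf hx₀min
  have hImV : LinearMap.range (M.map (show (t.1, b0) ≤ t from ⟨le_rfl, hy₀le⟩)) ≤
      ImPosV M v t ht2 := le_iInf hy₀min
  have huH' : u ∈ ⨅ x : {x : ℝ // x ∈ l.pos ∧ x ≤ t.1}, LinearMap.range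
      (M.map (show ((x : ℝ), t.2) ≤ t from ⟨x.2.2, le_rfl⟩)) := huH
  have huV' : u ∈ ⨅ y : {y : ℝ // y ∈ v.pos ∧ y ≤ t.2}, LinearMap.range
      (M.map (show (t.1, (y : ℝ)) ≤ t from ⟨le_rfl, y.2.2⟩)) := huV
  obtain ⟨z, hz⟩ := (Submodule.mem_iInf _).mp huH' x₀
  obtain ⟨yel, hyel⟩ := (Submodule.mem_iInf _).mp huV' y₀
  -- pull u back to (a0, b0)
  have hst : ((a0, b0) : ℝ × ℝ) ≤ t := ⟨hx₀le, hy₀le⟩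
  obtain ⟨w0, hw0y, hw0z⟩ := (hex (a0, b0) t hst yel z).mp (hyel.trans hz.symm)
  have hw0u : M.map hst w0 = u := by
    rw [M.map_factor (show ((a0, b0) : ℝ × ℝ) ≤ (t.1, b0) from ⟨hx₀le, le_rfl⟩)
      (show ((t.1, b0) : ℝ × ℝ) ≤ t from ⟨le_rfl, hy₀le⟩) hst w0, hw0y]
    exact hyel
  -- extract single kernel points
  obtain ⟨a, haA, b, hbB, hab⟩ := Submodule.mem_sup.mp huK
  haveI : Nonempty {x : ℝ // t.1 ≤ x} := ⟨⟨t.1, le_rfl⟩⟩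
  haveI : Nonempty {y : ℝ // t.2 ≤ y} := ⟨⟨t.2, le_rfl⟩⟩
  obtain ⟨x₁s, hax⟩ := (Submodule.mem_iSup_of_directed _
    (fun (i j : {x : ℝ // t.1 ≤ x}) =>
    ⟨⟨max (i : ℝ) (j : ℝ), i.2.trans (le_max_left _ _)⟩,
      M.ker_le_ker (show t ≤ ((i : ℝ), t.2) from ⟨i.2, le_rfl⟩)
        (show (((i : ℝ), t.2) : ℝ × ℝ) ≤ (max (i : ℝ) (j : ℝ), t.2) from
          ⟨le_max_left _ _, le_rfl⟩),
      M.ker_le_ker (show t ≤ ((j : ℝ), t.2) from ⟨j.2, le_rfl⟩)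
        (show (((j : ℝ), t.2) : ℝ × ℝ) ≤ (max (i : ℝ) (j : ℝ), t.2) from
          ⟨le_max_right _ _, le_rfl⟩)⟩)).mp haA
  obtain ⟨y₁s, hby⟩ := (Submodule.mem_iSup_of_directed _
    (fun (i j : {y : ℝ // t.2 ≤ y}) =>
    ⟨⟨max (i : ℝ) (j : ℝ), i.2.trans (le_max_left _ _)⟩,
      M.ker_le_ker (show t ≤ (t.1, (i : ℝ)) from ⟨le_rfl, i.2⟩)
        (show ((t.1, (i : ℝ)) : ℝ × ℝ) ≤ (t.1, max (i : ℝ) (j : ℝ)) from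
          ⟨le_rfl, le_max_left _ _⟩),
      M.ker_le_ker (show t ≤ (t.1, (j : ℝ)) from ⟨le_rfl, j.2⟩)
        (show ((t.1, (j : ℝ)) : ℝ × ℝ) ≤ (t.1, max (i : ℝ) (j : ℝ)) from
          ⟨le_rfl, le_max_right _ _⟩)⟩)).mp hbB
  set x₁ : ℝ := (x₁s : ℝ) with hx1
  set y₁ : ℝ := (y₁s : ℝ) with hy1
  have ht1x : t.1 ≤ x₁ := x₁s.2
  have ht2y : t.2 ≤ y₁ := y₁s.2
  have hka : M.map (show t ≤ (x₁, t.2) from ⟨ht1x, le_rfl⟩) a = 0 :=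
    LinearMap.mem_ker.mp hax
  have hkb : M.map (show t ≤ (t.1, y₁) from ⟨le_rfl, ht2y⟩) b = 0 :=
    LinearMap.mem_ker.mp hby
  have htT : t ≤ ((x₁, y₁) : ℝ × ℝ) := ⟨ht1x, ht2y⟩
  have hu0T : M.map htT u = 0 := by
    rw [← hab, map_add]
    have ha' : M.map htT a = 0 := by
      rw [M.map_factor (show t ≤ (x₁, t.2) from ⟨ht1x, le_rfl⟩)
        (show ((x₁, t.2) : ℝ × ℝ) ≤ (x₁, y₁) from ⟨le_rfl, ht2y⟩) htT a, hka, map_zero]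
    have hb' : M.map htT b = 0 := by
      rw [M.map_factor (show t ≤ (t.1, y₁) from ⟨le_rfl, ht2y⟩)
        (show ((t.1, y₁) : ℝ × ℝ) ≤ (x₁, y₁) from ⟨ht1x, le_rfl⟩) htT b, hkb, map_zero]
    rw [ha', hb', add_zero]
  have hsT : ((a0, b0) : ℝ × ℝ) ≤ (x₁, y₁) := ⟨hx₀le.trans ht1x, hy₀le.trans ht2y⟩
  have hw00 : M.map hsT w0 = 0 := by
    rw [M.map_factor hst htT hsT w0, hw0u, hu0T]
  -- kernel decomposition of w0 at (a0, b0)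
  have hcond : M.map (show (((x₁, y₁).1, (a0, b0).2) : ℝ × ℝ) ≤ (x₁, y₁) from
        ⟨le_rfl, hsT.2⟩)
      (M.map (show ((a0, b0) : ℝ × ℝ) ≤ (x₁, b0) from ⟨hsT.1, le_rfl⟩) w0) =
      M.map (show (((a0, b0).1, (x₁, y₁).2) : ℝ × ℝ) ≤ (x₁, y₁) from
        ⟨hsT.1, le_rfl⟩) (0 : M.space (a0, y₁)) := by
    rw [M.map_map, map_zero]
    exact hw00
  obtain ⟨w, hw1, hw2⟩ := (hex (a0, b0) (x₁, y₁) hsT _ 0).mp hcond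
  set p := w0 - w with hpdef
  set q := w with hqdef
  have hp : M.map (show ((a0, b0) : ℝ × ℝ) ≤ (x₁, b0) from ⟨hsT.1, le_rfl⟩) p = 0 := by
    rw [hpdef, map_sub, hw1, sub_self]
  have hq : M.map (show ((a0, b0) : ℝ × ℝ) ≤ (a0, y₁) from ⟨le_rfl, hsT.2⟩) q = 0 := hw2
  -- p comes from (a0, ym)
  have hymb0 : ym ≤ b0 := (v.lt ym hym b0 y₀.2.1).le
  have hxma0 : xm ≤ a0 := (l.lt xm hxm a0 x₀.2.1).le
  have hsp : ((a0, ym) : ℝ × ℝ) ≤ (x₁, b0) := ⟨hx₀le.trans ht1x, hymb0⟩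
  obtain ⟨r, hr1, hr2⟩ := (hex (a0, ym) (x₁, b0) hsp (0 : M.space (x₁, ym)) p).mp
    (by simp only [map_zero]; exact hp.symm)
  -- q comes from (xm, b0)
  have hsq : ((xm, b0) : ℝ × ℝ) ≤ (a0, y₁) := ⟨hxma0, hy₀le.trans ht2y⟩
  obtain ⟨r', hr'1, hr'2⟩ := (hex (xm, b0) (a0, y₁) hsq q (0 : M.space (xm, y₁))).mp
    (by simp only [map_zero]; exact hq)
  set P := M.map hst p with hPdef
  set Q := M.map hst q with hQdef
  have huPQ : u = Q + P := by
    rw [hQdef, hPdef, ← map_add, ← hw0u]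
    congr 1
    rw [hqdef, hpdef]
    abel
  -- P ∈ ImNegV ⊓ ImPosH
  have hPposH : P ∈ ImPosH M l t ht1 := by
    refine hImH ⟨M.map (show ((a0, b0) : ℝ × ℝ) ≤ (a0, t.2) from ⟨le_rfl, hy₀le⟩) p, ?_⟩
    exact (M.map_factor (show ((a0, b0) : ℝ × ℝ) ≤ (a0, t.2) from ⟨le_rfl, hy₀le⟩)
      (show ((a0, t.2) : ℝ × ℝ) ≤ t from ⟨hx₀le, le_rfl⟩) hst p).symm
  have hPr : M.map (show ((a0, ym) : ℝ × ℝ) ≤ t from ⟨hx₀le, hymb0.trans hy₀le⟩) r = P := by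
    rw [M.map_factor (show ((a0, ym) : ℝ × ℝ) ≤ (a0, b0) from ⟨le_rfl, hymb0⟩) hst
      (show ((a0, ym) : ℝ × ℝ) ≤ t from ⟨hx₀le, hymb0.trans hy₀le⟩) r, hr2]
  have hPnegV : P ∈ ImNegV M v t ht2 := by
    have hmem : P ∈ LinearMap.range (M.map (show ((t.1, ym) : ℝ × ℝ) ≤ t from
        ⟨le_rfl, (v.lt ym hym t.2 ht2).le⟩)) := by
      refine ⟨M.map (show ((a0, ym) : ℝ × ℝ) ≤ (t.1, ym) from ⟨hx₀le, le_rfl⟩) r, ?_⟩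
      rw [M.map_map]
      exact hPr
    exact le_iSup (fun y : v.neg => LinearMap.range
      (M.map (show (t.1, (y : ℝ)) ≤ t from ⟨le_rfl, (v.lt y y.2 t.2 ht2).le⟩)))
      ⟨ym, hym⟩ hmem
  -- Q ∈ ImNegH ⊓ ImPosV
  have hQposV : Q ∈ ImPosV M v t ht2 := by
    refine hImV ⟨M.map (show ((a0, b0) : ℝ × ℝ) ≤ (t.1, b0) from ⟨hx₀le, le_rfl⟩) q, ?_⟩
    exact (M.map_factor (show ((a0, b0) : ℝ × ℝ) ≤ (t.1, b0) from ⟨hx₀le, le_rfl⟩)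
      (show ((t.1, b0) : ℝ × ℝ) ≤ t from ⟨le_rfl, hy₀le⟩) hst q).symm
  have hQr : M.map (show ((xm, b0) : ℝ × ℝ) ≤ t from ⟨hxma0.trans hx₀le, hy₀le⟩) r' = Q := by
    rw [M.map_factor (show ((xm, b0) : ℝ × ℝ) ≤ (a0, b0) from ⟨hxma0, le_rfl⟩) hst
      (show ((xm, b0) : ℝ × ℝ) ≤ t from ⟨hxma0.trans hx₀le, hy₀le⟩) r', hr'1]
  have hQnegH : Q ∈ ImNegH M l t ht1 := by
    have hmem : Q ∈ LinearMap.range (M.map (show ((xm, t.2) : ℝ × ℝ) ≤ t from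
        ⟨(l.lt xm hxm t.1 ht1).le, le_rfl⟩)) := by
      refine ⟨M.map (show ((xm, b0) : ℝ × ℝ) ≤ (xm, t.2) from ⟨le_rfl, hy₀le⟩) r', ?_⟩
      rw [M.map_map]
      exact hQr
    exact le_iSup (fun x : l.neg => LinearMap.range
      (M.map (show ((x : ℝ), t.2) ≤ t from ⟨(l.lt x x.2 t.1 ht1).le, le_rfl⟩)))
      ⟨xm, hxm⟩ hmem
  rw [huPQ]
  exact Submodule.add_mem_sup ⟨hQnegH, hQposV⟩ ⟨hPnegV, hPposH⟩
end

section
/- (Covering by images and by kernels.) Let M be an exact pointwise finite-dimensional persistence bimodule over ℝ², let t ∈ ℝ², and let X ⊊ M_t be a proper subspace. Then: (i) there exist a horizontal cut l and a vertical cut v with t ∈ l⁺ × v⁺ such that, for the birth-quadrant shape S with support l⁺ × v⁺, Im⁻_{S,t} ⊆ X and Im⁺_{S,t} ⊄ X; (ii) there exist a horizontal cut r and a vertical cut w with t ∈ r⁻ × w⁻ such that, for the death-quadrant shape S' with support r⁻ × w⁻, Ker⁻_{S',t} ⊆ X and Ker⁺_{S',t} ⊄ X. -/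
attribute [local instance] Classical.propDecidable
set_option linter.unusedVariables false

variable {P : Type} [Preorder P] {k : Type} [Field k]

variable {α : Type} [LinearOrder α]

variable {k : Type} [Field k]

section Aux

variable {V : Type} [AddCommGroup V] [Module k V]

/-- In a finite-dimensional space, a nonempty chain of submodules has a least element. -/
lemma exists_min_le_aux {ι : Type} [Nonempty ι] [FiniteDimensional k V]
    (N : ι → Submodule k V)
    (hchain : ∀ i j, N i ≤ N j ∨ N j ≤ N i) : ∃ i₀, ∀ i, N i₀ ≤ N i := by
  obtain ⟨i₀, hi₀⟩ : ∃ i₀, ∀ i, Module.finrank k (N i₀) ≤ Module.finrank k (N i) := by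
    have hS : (Set.range fun i => Module.finrank k (N i)).Nonempty := Set.range_nonempty _
    obtain ⟨i₀, hi₀⟩ := Nat.sInf_mem hS
    exact ⟨i₀, fun i => le_trans (le_of_eq hi₀) (Nat.sInf_le ⟨i, rfl⟩)⟩
  refine ⟨i₀, fun i => ?_⟩
  rcases hchain i₀ i with h | h
  · exact h
  · exact le_of_eq (Submodule.eq_of_le_of_finrank_le h (hi₀ i)).symm

/-- Abstract cut-construction lemma, image version. -/
lemma exists_cut_im_abs [FiniteDimensional k V]
    (G : ℝ → Submodule k V) (hG : Monotone G) (B X : Submodule k V) (a : ℝ)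
    (hGa : ¬ B ⊓ G a ≤ X) :
    ∃ c : Cut ℝ, a ∈ c.pos ∧ (∀ x ∈ c.neg, B ⊓ G x ≤ X) ∧
      ¬ (B ⊓ ⨅ x : {x : ℝ // x ∈ c.pos ∧ x ≤ a}, G (x : ℝ)) ≤ X := by
  set A : Set ℝ := {x | B ⊓ G x ≤ X} with hA
  have hAdc : ∀ ⦃x y : ℝ⦄, x ∈ A → y ≤ x → y ∈ A := fun x y hx hyx =>
    le_trans (inf_le_inf_left B (hG hyx)) hx
  refine ⟨⟨A, Aᶜ, Set.union_compl_self A, Set.inter_compl_self A,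
      fun x hx y hy => lt_of_not_ge fun h => hy (hAdc hx h)⟩, hGa, fun x hx => hx, ?_⟩
  haveI : Nonempty {x : ℝ // x ∈ Aᶜ ∧ x ≤ a} := ⟨⟨a, hGa, le_rfl⟩⟩
  obtain ⟨x₀, hx₀⟩ := exists_min_le_aux
    (fun x : {x : ℝ // x ∈ Aᶜ ∧ x ≤ a} => B ⊓ G (x : ℝ))
    (fun i j => (le_total (i : ℝ) (j : ℝ)).imp
      (fun h => inf_le_inf_left B (hG h)) (fun h => inf_le_inf_left B (hG h)))
  intro hle
  exact x₀.2.1 (le_trans (le_trans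
    (le_inf inf_le_left (le_iInf fun x => le_trans (hx₀ x) inf_le_right)) hle) le_rfl)

/-- Abstract cut-construction lemma, kernel version. -/
lemma exists_cut_ker_abs [FiniteDimensional k V]
    (G : ℝ → Submodule k V) (hG : Monotone G) (B X : Submodule k V) (a : ℝ)
    (hB : ¬ B ≤ X) (hGa : B ⊓ G a ≤ X) :
    ∃ c : Cut ℝ, a ∈ c.neg ∧ (∀ x ∈ c.neg, B ⊓ G x ≤ X) ∧
      ¬ (B ⊓ ⨅ x : c.pos, G (x : ℝ)) ≤ X := by
  set A : Set ℝ := {x | B ⊓ G x ≤ X} with hA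
  have hAdc : ∀ ⦃x y : ℝ⦄, x ∈ A → y ≤ x → y ∈ A := fun x y hx hyx =>
    le_trans (inf_le_inf_left B (hG hyx)) hx
  refine ⟨⟨A, Aᶜ, Set.union_compl_self A, Set.inter_compl_self A,
      fun x hx y hy => lt_of_not_ge fun h => hy (hAdc hx h)⟩, hGa, fun x hx => hx, ?_⟩
  rcases isEmpty_or_nonempty (Aᶜ : Set ℝ) with hι | hι
  · rw [iInf_of_empty, inf_top_eq]
    exact hB
  · obtain ⟨x₀, hx₀⟩ := exists_min_le_aux
      (fun x : (Aᶜ : Set ℝ) => B ⊓ G (x : ℝ))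
      (fun i j => (le_total (i : ℝ) (j : ℝ)).imp
        (fun h => inf_le_inf_left B (hG h)) (fun h => inf_le_inf_left B (hG h)))
    intro hle
    exact x₀.2 (le_trans (le_trans
      (le_inf inf_le_left (le_iInf fun x => le_trans (hx₀ x) inf_le_right)) hle) le_rfl)

/-- Meet of a chain-supremum with a submodule is small if each piece is. -/
lemma iSup_inf_le_aux {ι : Type} (N : ι → Submodule k V)
    (hchain : ∀ i j, N i ≤ N j ∨ N j ≤ N i) (I X : Submodule k V)
    (h : ∀ i, I ⊓ N i ≤ X) : (⨆ i, N i) ⊓ I ≤ X := by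
  rcases isEmpty_or_nonempty ι with hι | hι
  · rw [iSup_of_empty]
    exact le_trans inf_le_left bot_le
  · intro z hz
    obtain ⟨hz1, hz2⟩ := Submodule.mem_inf.1 hz
    have hdir : Directed (· ≤ ·) N := fun i j =>
      (hchain i j).elim (fun h' => ⟨j, h', le_rfl⟩) (fun h' => ⟨i, le_rfl, h'⟩)
    obtain ⟨i, hi⟩ := (Submodule.mem_iSup_of_directed N hdir).1 hz1
    exact h i (Submodule.mem_inf.2 ⟨hz2, hi⟩)

end Aux

section PersAux

lemma range_le_range (M : PersMod (ℝ × ℝ) k) {s s' u : ℝ × ℝ} (h1 : s ≤ s') (h2 : s' ≤ u) :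
    LinearMap.range (M.map (h1.trans h2)) ≤ LinearMap.range (M.map h2) := by
  rw [M.map_trans h1 h2]
  exact LinearMap.range_comp_le_range _ _

lemma ker_le_ker (M : PersMod (ℝ × ℝ) k) {s u u' : ℝ × ℝ} (h1 : s ≤ u) (h2 : u ≤ u') :
    LinearMap.ker (M.map h1) ≤ LinearMap.ker (M.map (h1.trans h2)) := by
  rw [M.map_trans h1 h2]
  exact LinearMap.ker_le_ker_comp _ _

lemma range_refl_top (M : PersMod (ℝ × ℝ) k) (u : ℝ × ℝ) (h : u ≤ u) :
    LinearMap.range (M.map h) = ⊤ := by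
  have h' : M.map h = LinearMap.id := M.map_refl u
  rw [h']
  exact LinearMap.range_id

lemma ker_refl_bot (M : PersMod (ℝ × ℝ) k) (u : ℝ × ℝ) (h : u ≤ u) :
    LinearMap.ker (M.map h) = ⊥ := by
  have h' : M.map h = LinearMap.id := M.map_refl u
  rw [h']
  exact LinearMap.ker_id

/-- Horizontal image family. -/
noncomputable def GIH (M : PersMod (ℝ × ℝ) k) (t : ℝ × ℝ) (x : ℝ) : Submodule k (M.space t) :=
  if h : x ≤ t.1 then
    LinearMap.range (M.map (show ((x : ℝ), t.2) ≤ t from ⟨h, le_rfl⟩)) else ⊤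

lemma GIH_eq (M : PersMod (ℝ × ℝ) k) (t : ℝ × ℝ) {x : ℝ} (h : x ≤ t.1) :
    GIH M t x = LinearMap.range (M.map (show ((x : ℝ), t.2) ≤ t from ⟨h, le_rfl⟩)) :=
  dif_pos h

lemma GIH_mono (M : PersMod (ℝ × ℝ) k) (t : ℝ × ℝ) : Monotone (GIH M t) := by
  intro x y hxy
  by_cases hy : y ≤ t.1
  · rw [GIH_eq M t hy, GIH_eq M t (hxy.trans hy)]
    exact range_le_range M (show ((x : ℝ), t.2) ≤ ((y : ℝ), t.2) from ⟨hxy, le_rfl⟩)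
      (show ((y : ℝ), t.2) ≤ t from ⟨hy, le_rfl⟩)
  · rw [show GIH M t y = ⊤ from dif_neg hy]
    exact le_top

lemma GIH_self (M : PersMod (ℝ × ℝ) k) (t : ℝ × ℝ) : GIH M t t.1 = ⊤ := by
  rw [GIH_eq M t le_rfl]
  exact range_refl_top M t _

/-- Vertical image family. -/
noncomputable def GIV (M : PersMod (ℝ × ℝ) k) (t : ℝ × ℝ) (y : ℝ) : Submodule k (M.space t) :=
  if h : y ≤ t.2 then
    LinearMap.range (M.map (show (t.1, (y : ℝ)) ≤ t from ⟨le_rfl, h⟩)) else ⊤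

lemma GIV_eq (M : PersMod (ℝ × ℝ) k) (t : ℝ × ℝ) {y : ℝ} (h : y ≤ t.2) :
    GIV M t y = LinearMap.range (M.map (show (t.1, (y : ℝ)) ≤ t from ⟨le_rfl, h⟩)) :=
  dif_pos h

lemma GIV_mono (M : PersMod (ℝ × ℝ) k) (t : ℝ × ℝ) : Monotone (GIV M t) := by
  intro x y hxy
  by_cases hy : y ≤ t.2
  · rw [GIV_eq M t hy, GIV_eq M t (hxy.trans hy)]
    exact range_le_range M (show (t.1, (x : ℝ)) ≤ (t.1, (y : ℝ)) from ⟨le_rfl, hxy⟩)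
      (show (t.1, (y : ℝ)) ≤ t from ⟨le_rfl, hy⟩)
  · rw [show GIV M t y = ⊤ from dif_neg hy]
    exact le_top

lemma GIV_self (M : PersMod (ℝ × ℝ) k) (t : ℝ × ℝ) : GIV M t t.2 = ⊤ := by
  rw [GIV_eq M t le_rfl]
  exact range_refl_top M t _

/-- Horizontal kernel family. -/
noncomputable def GKH (M : PersMod (ℝ × ℝ) k) (t : ℝ × ℝ) (x : ℝ) : Submodule k (M.space t) :=
  if h : t.1 ≤ x then
    LinearMap.ker (M.map (show t ≤ ((x : ℝ), t.2) from ⟨h, le_rfl⟩)) else ⊥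

lemma GKH_eq (M : PersMod (ℝ × ℝ) k) (t : ℝ × ℝ) {x : ℝ} (h : t.1 ≤ x) :
    GKH M t x = LinearMap.ker (M.map (show t ≤ ((x : ℝ), t.2) from ⟨h, le_rfl⟩)) :=
  dif_pos h

lemma GKH_mono (M : PersMod (ℝ × ℝ) k) (t : ℝ × ℝ) : Monotone (GKH M t) := by
  intro x y hxy
  by_cases hx : t.1 ≤ x
  · rw [GKH_eq M t hx, GKH_eq M t (hx.trans hxy)]
    exact ker_le_ker M (show t ≤ ((x : ℝ), t.2) from ⟨hx, le_rfl⟩)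
      (show ((x : ℝ), t.2) ≤ ((y : ℝ), t.2) from ⟨hxy, le_rfl⟩)
  · rw [show GKH M t x = ⊥ from dif_neg hx]
    exact bot_le

lemma GKH_self (M : PersMod (ℝ × ℝ) k) (t : ℝ × ℝ) : GKH M t t.1 = ⊥ := by
  rw [GKH_eq M t le_rfl]
  exact ker_refl_bot M t _

/-- Vertical kernel family. -/
noncomputable def GKV (M : PersMod (ℝ × ℝ) k) (t : ℝ × ℝ) (y : ℝ) : Submodule k (M.space t) :=
  if h : t.2 ≤ y then
    LinearMap.ker (M.map (show t ≤ (t.1, (y : ℝ)) from ⟨le_rfl, h⟩)) else ⊥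

lemma GKV_eq (M : PersMod (ℝ × ℝ) k) (t : ℝ × ℝ) {y : ℝ} (h : t.2 ≤ y) :
    GKV M t y = LinearMap.ker (M.map (show t ≤ (t.1, (y : ℝ)) from ⟨le_rfl, h⟩)) :=
  dif_pos h

lemma GKV_mono (M : PersMod (ℝ × ℝ) k) (t : ℝ × ℝ) : Monotone (GKV M t) := by
  intro x y hxy
  by_cases hx : t.2 ≤ x
  · rw [GKV_eq M t hx, GKV_eq M t (hx.trans hxy)]
    exact ker_le_ker M (show t ≤ (t.1, (x : ℝ)) from ⟨le_rfl, hx⟩)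
      (show (t.1, (x : ℝ)) ≤ (t.1, (y : ℝ)) from ⟨le_rfl, hxy⟩)
  · rw [show GKV M t x = ⊥ from dif_neg hx]
    exact bot_le

lemma GKV_self (M : PersMod (ℝ × ℝ) k) (t : ℝ × ℝ) : GKV M t t.2 = ⊥ := by
  rw [GKV_eq M t le_rfl]
  exact ker_refl_bot M t _

end PersAux

/-- **Covering by images and by kernels.** For an exact pfd persistence bimodule over
`ℝ²` and a proper subspace `X ⊊ M_t`: (i) there is a birth quadrant `S` (given by cuts
`l`, `v`) containing `t` with `Im⁻_{S,t} ⊆ X` and `Im⁺_{S,t} ⊄ X`; (ii) there is a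
death quadrant `S'` (given by cuts `r`, `w`) containing `t` with `Ker⁻_{S',t} ⊆ X` and
`Ker⁺_{S',t} ⊄ X`. -/
theorem covering_by_images_and_kernels {k : Type} [Field k] (M : PersMod (ℝ × ℝ) k)
    (hpfd : M.pfd) (hex : IsExactBimod M) (t : ℝ × ℝ)
    (X : Submodule k (M.space t)) (hX : X ≠ ⊤) :
    (∃ (l v : Cut ℝ) (h1 : t.1 ∈ l.pos) (h2 : t.2 ∈ v.pos),
      (ImNegH M l t h1 ⊓ ImPosV M v t h2 ⊔ ImNegV M v t h2 ⊓ ImPosH M l t h1) ≤ X ∧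
      ¬ (ImPosH M l t h1 ⊓ ImPosV M v t h2) ≤ X) ∧
    (∃ (r w : Cut ℝ) (h1 : t.1 ∈ r.neg) (h2 : t.2 ∈ w.neg),
      (KerNegH M r t h1 ⊓ KerPosV M w t h2 ⊔ KerNegV M w t h2 ⊓ KerPosH M r t h1) ≤ X ∧
      ¬ (KerPosH M r t h1 ⊓ KerPosV M w t h2) ≤ X) := by
  haveI : FiniteDimensional k (M.space t) := hpfd t
  have hXtop : ¬ (⊤ : Submodule k (M.space t)) ≤ X := fun h => hX (top_le_iff.1 h)
  constructor
  · -- images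
    obtain ⟨l, h1, hlneg, hlpos⟩ := exists_cut_im_abs (GIH M t) (GIH_mono M t) ⊤ X t.1
      (by rw [GIH_self, top_inf_eq]; exact hXtop)
    have hImPosH : ImPosH M l t h1 = ⨅ x : {x : ℝ // x ∈ l.pos ∧ x ≤ t.1}, GIH M t (x : ℝ) :=
      iInf_congr fun x => (GIH_eq M t x.2.2).symm
    have hI : ¬ ImPosH M l t h1 ≤ X := by
      rw [hImPosH]
      intro h
      exact hlpos (le_trans inf_le_right h)
    obtain ⟨v, h2, hvneg, hvpos⟩ := exists_cut_im_abs (GIV M t) (GIV_mono M t)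
      (ImPosH M l t h1) X t.2 (by rw [GIV_self, inf_top_eq]; exact hI)
    have hImPosV : ImPosV M v t h2 = ⨅ y : {y : ℝ // y ∈ v.pos ∧ y ≤ t.2}, GIV M t (y : ℝ) :=
      iInf_congr fun y => (GIV_eq M t y.2.2).symm
    refine ⟨l, v, h1, h2, sup_le ?_ ?_, ?_⟩
    · refine le_trans inf_le_left (iSup_le fun x => ?_)
      have hx : (x : ℝ) ≤ t.1 := (l.lt x x.2 t.1 h1).le
      have := hlneg x x.2
      rw [top_inf_eq, GIH_eq M t hx] at this
      exact this
    · refine iSup_inf_le_aux _ (fun i j => ?_) _ X (fun y => ?_)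
      · rcases le_total (i : ℝ) (j : ℝ) with h | h
        · exact Or.inl (range_le_range M
            (show (t.1, (i : ℝ)) ≤ (t.1, (j : ℝ)) from ⟨le_rfl, h⟩) _)
        · exact Or.inr (range_le_range M
            (show (t.1, (j : ℝ)) ≤ (t.1, (i : ℝ)) from ⟨le_rfl, h⟩) _)
      · have hy : (y : ℝ) ≤ t.2 := (v.lt y y.2 t.2 h2).le
        have := hvneg y y.2
        rw [GIV_eq M t hy] at this
        exact this
    · rw [hImPosH, hImPosV]
      rw [hImPosH] at hvpos
      exact hvpos
  · -- kernels
    obtain ⟨r, h1, hrneg, hrpos⟩ := exists_cut_ker_abs (GKH M t) (GKH_mono M t) ⊤ X t.1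
      hXtop (by rw [GKH_self, inf_bot_eq]; exact bot_le)
    have hKerPosH : KerPosH M r t h1 = ⨅ x : r.pos, GKH M t (x : ℝ) :=
      iInf_congr fun x => (GKH_eq M t (r.lt t.1 h1 x x.2).le).symm
    have hK : ¬ KerPosH M r t h1 ≤ X := by
      rw [hKerPosH]
      intro h
      exact hrpos (le_trans inf_le_right h)
    obtain ⟨w, h2, hwneg, hwpos⟩ := exists_cut_ker_abs (GKV M t) (GKV_mono M t)
      (KerPosH M r t h1) X t.2 hK (by rw [GKV_self, inf_bot_eq]; exact bot_le)
    have hKerPosV : KerPosV M w t h2 = ⨅ y : w.pos, GKV M t (y : ℝ) :=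
      iInf_congr fun y => (GKV_eq M t (w.lt t.2 h2 y y.2).le).symm
    refine ⟨r, w, h1, h2, sup_le ?_ ?_, ?_⟩
    · refine le_trans inf_le_left (iSup_le fun x => ?_)
      have := hrneg x x.2.1
      rw [top_inf_eq, GKH_eq M t x.2.2] at this
      exact this
    · refine iSup_inf_le_aux _ (fun i j => ?_) _ X (fun y => ?_)
      · rcases le_total (i : ℝ) (j : ℝ) with h | h
        · exact Or.inl (ker_le_ker M _
            (show (t.1, (i : ℝ)) ≤ (t.1, (j : ℝ)) from ⟨le_rfl, h⟩))
        · exact Or.inr (ker_le_ker M _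
            (show (t.1, (j : ℝ)) ≤ (t.1, (i : ℝ)) from ⟨le_rfl, h⟩))
      · have := hwneg y y.2.1
        rw [GKV_eq M t y.2.2] at this
        exact this
    · rw [hKerPosH, hKerPosV]
      rw [hKerPosH] at hwpos
      exact hwpos
end

section
/- (One-dimensional strong covering.) Let M be a pointwise finite-dimensional persistence bimodule over ℝ², let t ∈ ℝ², and let Y ⊊ M_t and Z ⊄ Y be subspaces of M_t. Then: (i) there is a horizontal cut c with t₁ ∈ c⁺ such that Im⁻_{c,t} ∩ Z ⊆ Y and Im⁺_{c,t} ∩ Z ⊄ Y; (ii) there is a horizontal cut c with t₁ ∈ c⁻ such that Ker⁻_{c,t} ∩ Z ⊆ Y and Ker⁺_{c,t} ∩ Z ⊄ Y. -/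
attribute [local instance] Classical.propDecidable
set_option linter.unusedVariables false
set_option maxHeartbeats 1000000



variable {P : Type} [Preorder P] {k : Type} [Field k]

variable {α : Type} [LinearOrder α]

variable {k : Type} [Field k]

lemma exists_iSup_eq' {k V : Type} [Field k] [AddCommGroup V] [Module k V] [FiniteDimensional k V]
    {ι : Type} [Nonempty ι] (f : ι → Submodule k V)
    (hdir : ∀ i j, ∃ l, f i ≤ f l ∧ f j ≤ f l) :
    ∃ i, (⨆ j, f j) = f i := by
  have hne : (Set.range fun i => Module.finrank k (f i)).Nonempty := Set.range_nonempty _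
  have hbdd : BddAbove (Set.range fun i => Module.finrank k (f i)) := by
    refine ⟨Module.finrank k V, ?_⟩
    rintro n ⟨i, rfl⟩
    exact Submodule.finrank_le (f i)
  obtain ⟨i, hi⟩ := Nat.sSup_mem hne hbdd
  refine ⟨i, le_antisymm (iSup_le fun j => ?_) (le_iSup f i)⟩
  obtain ⟨l, hil, hjl⟩ := hdir i j
  have h1 : Module.finrank k (f l) ≤ Module.finrank k (f i) :=
    (le_csSup hbdd ⟨l, rfl⟩).trans hi.ge
  have h2 : f i = f l := Submodule.eq_of_le_of_finrank_le hil h1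
  exact h2 ▸ hjl

lemma exists_iInf_eq' {k V : Type} [Field k] [AddCommGroup V] [Module k V] [FiniteDimensional k V]
    {ι : Type} [Nonempty ι] (f : ι → Submodule k V)
    (hdir : ∀ i j, ∃ l, f l ≤ f i ∧ f l ≤ f j) :
    ∃ i, (⨅ j, f j) = f i := by
  have hne : (Set.range fun i => Module.finrank k (f i)).Nonempty := Set.range_nonempty _
  obtain ⟨i, hi⟩ := Nat.sInf_mem hne
  refine ⟨i, le_antisymm (iInf_le f i) (le_iInf fun j => ?_)⟩
  obtain ⟨l, hli, hlj⟩ := hdir i j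
  have h1 : Module.finrank k (f i) ≤ Module.finrank k (f l) :=
    hi.le.trans (Nat.sInf_le ⟨l, rfl⟩)
  have h2 : f l = f i := Submodule.eq_of_le_of_finrank_le hli h1
  exact h2 ▸ hlj

lemma range_mono_aux_s9 {k : Type} [Field k] (M : PersMod (ℝ × ℝ) k) {a b u : ℝ × ℝ}
    (hab : a ≤ b) (hbu : b ≤ u) (hau : a ≤ u) :
    LinearMap.range (M.map hau) ≤ LinearMap.range (M.map hbu) := by
  rintro x ⟨y, rfl⟩
  refine ⟨M.map hab y, ?_⟩
  have h : M.map hau = (M.map hbu).comp (M.map hab) := M.map_trans hab hbu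
  rw [h]; rfl

lemma ker_mono_aux_s9 {k : Type} [Field k] (M : PersMod (ℝ × ℝ) k) {u a b : ℝ × ℝ}
    (hua : u ≤ a) (hab : a ≤ b) (hub : u ≤ b) :
    LinearMap.ker (M.map hua) ≤ LinearMap.ker (M.map hub) := by
  intro x hx
  have h : M.map hub = (M.map hab).comp (M.map hua) := M.map_trans hua hab
  simp only [LinearMap.mem_ker] at hx ⊢
  rw [h, LinearMap.comp_apply, hx, map_zero]

/-- **One-dimensional strong covering.** For a pfd persistence bimodule over `ℝ²`,
a point `t`, and subspaces `Y ⊊ M_t`, `Z ⊄ Y`: (i) there is a horizontal cut `c` with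
`t₁ ∈ c⁺` such that `Im⁻_{c,t} ∩ Z ⊆ Y` and `Im⁺_{c,t} ∩ Z ⊄ Y`; (ii) there is a
horizontal cut `c` with `t₁ ∈ c⁻` such that `Ker⁻_{c,t} ∩ Z ⊆ Y` and
`Ker⁺_{c,t} ∩ Z ⊄ Y`. -/
theorem one_dimensional_strong_covering {k : Type} [Field k] (M : PersMod (ℝ × ℝ) k)
    (hpfd : M.pfd) (t : ℝ × ℝ) (Y Z : Submodule k (M.space t))
    (hY : Y ≠ ⊤) (hZ : ¬ Z ≤ Y) :
    (∃ (c : Cut ℝ) (hc : t.1 ∈ c.pos),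
      ImNegH M c t hc ⊓ Z ≤ Y ∧ ¬ ImPosH M c t hc ⊓ Z ≤ Y) ∧
    (∃ (c : Cut ℝ) (hc : t.1 ∈ c.neg),
      KerNegH M c t hc ⊓ Z ≤ Y ∧ ¬ KerPosH M c t hc ⊓ Z ≤ Y) := by
  have hfd : FiniteDimensional k (M.space t) := hpfd t
  constructor
  · -- Part (i): images
    set N : Set ℝ := {x | ∃ h : x ≤ t.1,
      LinearMap.range (M.map (show ((x, t.2) : ℝ × ℝ) ≤ t from ⟨h, le_rfl⟩)) ⊓ Z ≤ Y} with hNdef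
    have hNdown : ∀ x ∈ N, ∀ y ≤ x, y ∈ N := by
      rintro x ⟨hx, hle⟩ y hyx
      refine ⟨hyx.trans hx, le_trans (inf_le_inf_right Z
        (range_mono_aux_s9 M (show ((y, t.2) : ℝ × ℝ) ≤ (x, t.2) from ⟨hyx, le_rfl⟩)
          (show ((x, t.2) : ℝ × ℝ) ≤ t from ⟨hx, le_rfl⟩) _)) hle⟩
    set c : Cut ℝ := ⟨N, Nᶜ, Set.union_compl_self N, Set.inter_compl_self N,
      fun x hx y hy => lt_of_not_ge fun h => hy (hNdown x hx y h)⟩ with hcdef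
    have hc : t.1 ∈ c.pos := by
      rintro ⟨h, hle⟩
      have he : M.map (show ((t.1, t.2) : ℝ × ℝ) ≤ t from ⟨h, le_rfl⟩) = LinearMap.id :=
        M.map_refl t
      have htop : LinearMap.range (M.map (show ((t.1, t.2) : ℝ × ℝ) ≤ t from ⟨h, le_rfl⟩)) = ⊤ := by
        rw [he]; exact LinearMap.range_id
      rw [htop, top_inf_eq] at hle
      exact hZ hle
    refine ⟨c, hc, ?_, ?_⟩
    · -- ImNeg ∩ Z ≤ Y
      by_cases hne : Nonempty c.neg
      · set f : c.neg → Submodule k (M.space t) := fun x => LinearMap.range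
          (M.map (show ((x : ℝ), t.2) ≤ t from ⟨(c.lt x x.2 t.1 hc).le, le_rfl⟩)) with hfdef
        have hdir : ∀ i j : c.neg, ∃ l, f i ≤ f l ∧ f j ≤ f l := by
          intro i j
          rcases le_total (i : ℝ) (j : ℝ) with hij | hij
          · exact ⟨j, range_mono_aux_s9 M (show (((i : ℝ), t.2) : ℝ × ℝ) ≤ ((j : ℝ), t.2)
              from ⟨hij, le_rfl⟩) _ _, le_rfl⟩
          · exact ⟨i, le_rfl, range_mono_aux_s9 M (show (((j : ℝ), t.2) : ℝ × ℝ) ≤ ((i : ℝ), t.2)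
              from ⟨hij, le_rfl⟩) _ _⟩
        obtain ⟨i, hi⟩ := exists_iSup_eq' f hdir
        have heq : ImNegH M c t hc = f i := hi
        rw [heq]
        obtain ⟨h, hle⟩ := i.2
        exact hle
      · have : IsEmpty c.neg := not_nonempty_iff.mp hne
        have heq : ImNegH M c t hc = ⊥ := by
          rw [ImNegH]; exact iSup_of_empty _
        rw [heq, bot_inf_eq]
        exact bot_le
    · -- ImPos ∩ Z ⊄ Y
      have hne : Nonempty {x : ℝ // x ∈ c.pos ∧ x ≤ t.1} := ⟨⟨t.1, hc, le_rfl⟩⟩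
      set f : {x : ℝ // x ∈ c.pos ∧ x ≤ t.1} → Submodule k (M.space t) := fun x =>
        LinearMap.range (M.map (show ((x : ℝ), t.2) ≤ t from ⟨x.2.2, le_rfl⟩)) with hfdef
      have hdir : ∀ i j, ∃ l, f l ≤ f i ∧ f l ≤ f j := by
        intro i j
        rcases le_total (i : ℝ) (j : ℝ) with hij | hij
        · exact ⟨i, le_rfl, range_mono_aux_s9 M (show (((i : ℝ), t.2) : ℝ × ℝ) ≤ ((j : ℝ), t.2)
            from ⟨hij, le_rfl⟩) _ _⟩
        · exact ⟨j, range_mono_aux_s9 M (show (((j : ℝ), t.2) : ℝ × ℝ) ≤ ((i : ℝ), t.2)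
            from ⟨hij, le_rfl⟩) _ _, le_rfl⟩
      obtain ⟨i, hi⟩ := exists_iInf_eq' f hdir
      have heq : ImPosH M c t hc = f i := hi
      rw [heq]
      intro hcon
      exact i.2.1 ⟨i.2.2, hcon⟩
  · -- Part (ii): kernels
    set N : Set ℝ := {x | x < t.1 ∨ ∃ h : t.1 ≤ x,
      LinearMap.ker (M.map (show t ≤ ((x, t.2) : ℝ × ℝ) from ⟨h, le_rfl⟩)) ⊓ Z ≤ Y} with hNdef
    have hNdown : ∀ x ∈ N, ∀ y ≤ x, y ∈ N := by
      rintro x hx y hyx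
      rcases lt_or_ge y t.1 with hy | hy
      · exact Or.inl hy
      · rcases hx with hx | ⟨hx, hle⟩
        · exact absurd (hy.trans hyx) (not_le.mpr hx)
        · exact Or.inr ⟨hy, le_trans (inf_le_inf_right Z
            (ker_mono_aux_s9 M (show t ≤ ((y, t.2) : ℝ × ℝ) from ⟨hy, le_rfl⟩)
              (show ((y, t.2) : ℝ × ℝ) ≤ (x, t.2) from ⟨hyx, le_rfl⟩) _)) hle⟩
    set c : Cut ℝ := ⟨N, Nᶜ, Set.union_compl_self N, Set.inter_compl_self N,
      fun x hx y hy => lt_of_not_ge fun h => hy (hNdown x hx y h)⟩ with hcdef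
    have hc : t.1 ∈ c.neg := by
      refine Or.inr ⟨le_rfl, ?_⟩
      have he : M.map (show t ≤ ((t.1, t.2) : ℝ × ℝ) from ⟨le_rfl, le_rfl⟩) = LinearMap.id :=
        M.map_refl t
      have hbot : LinearMap.ker (M.map (show t ≤ ((t.1, t.2) : ℝ × ℝ)
          from ⟨le_rfl, le_rfl⟩)) = ⊥ := by
        rw [he]; exact LinearMap.ker_id
      rw [hbot, bot_inf_eq]
      exact bot_le
    refine ⟨c, hc, ?_, ?_⟩
    · -- KerNeg ∩ Z ≤ Y
      have hne : Nonempty {x : ℝ // x ∈ c.neg ∧ t.1 ≤ x} := ⟨⟨t.1, hc, le_rfl⟩⟩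
      set f : {x : ℝ // x ∈ c.neg ∧ t.1 ≤ x} → Submodule k (M.space t) := fun x =>
        LinearMap.ker (M.map (show t ≤ ((x : ℝ), t.2) from ⟨x.2.2, le_rfl⟩)) with hfdef
      have hdir : ∀ i j, ∃ l, f i ≤ f l ∧ f j ≤ f l := by
        intro i j
        rcases le_total (i : ℝ) (j : ℝ) with hij | hij
        · exact ⟨j, ker_mono_aux_s9 M _ (show (((i : ℝ), t.2) : ℝ × ℝ) ≤ ((j : ℝ), t.2)
            from ⟨hij, le_rfl⟩) _, le_rfl⟩
        · exact ⟨i, le_rfl, ker_mono_aux_s9 M _ (show (((j : ℝ), t.2) : ℝ × ℝ) ≤ ((i : ℝ), t.2)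
            from ⟨hij, le_rfl⟩) _⟩
      obtain ⟨i, hi⟩ := exists_iSup_eq' f hdir
      have heq : KerNegH M c t hc = f i := hi
      rw [heq]
      rcases i.2.1 with hx | ⟨h, hle⟩
      · exact absurd i.2.2 (not_le.mpr hx)
      · exact hle
    · -- KerPos ∩ Z ⊄ Y
      by_cases hne : Nonempty c.pos
      · set f : c.pos → Submodule k (M.space t) := fun x => LinearMap.ker
          (M.map (show t ≤ ((x : ℝ), t.2) from ⟨(c.lt t.1 hc x x.2).le, le_rfl⟩)) with hfdef
        have hdir : ∀ i j : c.pos, ∃ l, f l ≤ f i ∧ f l ≤ f j := by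
          intro i j
          rcases le_total (i : ℝ) (j : ℝ) with hij | hij
          · exact ⟨i, le_rfl, ker_mono_aux_s9 M _ (show (((i : ℝ), t.2) : ℝ × ℝ) ≤ ((j : ℝ), t.2)
              from ⟨hij, le_rfl⟩) _⟩
          · exact ⟨j, ker_mono_aux_s9 M _ (show (((j : ℝ), t.2) : ℝ × ℝ) ≤ ((i : ℝ), t.2)
              from ⟨hij, le_rfl⟩) _, le_rfl⟩
        obtain ⟨i, hi⟩ := exists_iInf_eq' f hdir
        have heq : KerPosH M c t hc = f i := hi
        rw [heq]
        intro hcon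
        have hi1 : (i : ℝ) ∈ Nᶜ := i.2
        have ht1 : t.1 ≤ (i : ℝ) := (c.lt t.1 hc i i.2).le
        exact hi1 (Or.inr ⟨ht1, hcon⟩)
      · have : IsEmpty c.pos := not_nonempty_iff.mp hne
        have heq : KerPosH M c t hc = ⊤ := by
          rw [KerPosH]; exact iInf_of_empty _
        rw [heq, top_inf_eq]
        exact hZ
end

section
/- Let U be a vector space over a field k, let {(F⁻_λ, F⁺_λ)}_{λ∈Λ} be a family of sections of U that covers U, and for each λ ∈ Λ let W_λ be a subspace of U with F⁺_λ = W_λ ⊕ F⁻_λ (i.e., W_λ + F⁻_λ = F⁺_λ and W_λ ∩ F⁻_λ = 0). Then U = Σ_{λ∈Λ} W_λ. -/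
/-- If a family of sections `(F⁻_λ, F⁺_λ)` of a vector space `U` covers `U` (for every
proper subspace `X ⊊ U` there is `λ` with `X + F⁻_λ ≠ X + F⁺_λ`), and for each `λ` the
subspace `W_λ` satisfies `F⁺_λ = W_λ ⊕ F⁻_λ`, then `U = Σ_λ W_λ`. -/
theorem covering_sections_span {k U : Type} [Field k] [AddCommGroup U] [Module k U]
    {Λ : Type} (Fneg Fpos : Λ → Submodule k U)
    (hsec : ∀ l, Fneg l ≤ Fpos l)
    (hcov : ∀ X : Submodule k U, X ≠ ⊤ → ∃ l, X ⊔ Fneg l ≠ X ⊔ Fpos l)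
    (W : Λ → Submodule k U)
    (hWsum : ∀ l, W l ⊔ Fneg l = Fpos l) (hWdisj : ∀ l, W l ⊓ Fneg l = ⊥) :
    (⨆ l, W l) = ⊤ := by
  by_contra h
  obtain ⟨l, hl⟩ := hcov _ h
  apply hl
  have hW : W l ≤ ⨆ l, W l := le_iSup W l
  calc (⨆ l, W l) ⊔ Fneg l = ((⨆ l, W l) ⊔ W l) ⊔ Fneg l := by rw [sup_of_le_left hW]
    _ = (⨆ l, W l) ⊔ (W l ⊔ Fneg l) := by rw [sup_assoc]
    _ = (⨆ l, W l) ⊔ Fpos l := by rw [hWsum]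
end

section
/- Let U be a vector space over a field k. Suppose {(F⁻_λ, F⁺_λ)}_{λ∈Λ} is a family of sections of U that covers U, and {(G⁻_σ, G⁺_σ)}_{σ∈Σ} is a family of sections of U that strongly covers U. Then the family of sections {(F⁻_λ + G⁻_σ ∩ F⁺_λ, F⁻_λ + G⁺_σ ∩ F⁺_λ) : (λ,σ) ∈ Λ × Σ} covers U. -/
/-- If a family of sections `(F⁻_λ, F⁺_λ)` of a vector space `U` covers `U`, and a
family of sections `(G⁻_σ, G⁺_σ)` strongly covers `U`, then the combined family
`(F⁻_λ + G⁻_σ ∩ F⁺_λ, F⁻_λ + G⁺_σ ∩ F⁺_λ)` covers `U`. -/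
theorem covering_combination {k U : Type} [Field k] [AddCommGroup U] [Module k U]
    {Λ Sg : Type} (Fneg Fpos : Λ → Submodule k U) (Gneg Gpos : Sg → Submodule k U)
    (hFsec : ∀ l, Fneg l ≤ Fpos l) (hGsec : ∀ s, Gneg s ≤ Gpos s)
    (hFcov : ∀ X : Submodule k U, X ≠ ⊤ → ∃ l, X ⊔ Fneg l ≠ X ⊔ Fpos l)
    (hGstrong : ∀ Y Z : Submodule k U, Y ≠ ⊤ → ¬ Z ≤ Y →
      ∃ s, Y ⊔ (Gneg s ⊓ Z) ≠ Y ⊔ (Gpos s ⊓ Z)) :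
    ∀ X : Submodule k U, X ≠ ⊤ → ∃ (l : Λ) (s : Sg),
      X ⊔ (Fneg l ⊔ Gneg s ⊓ Fpos l) ≠ X ⊔ (Fneg l ⊔ Gpos s ⊓ Fpos l) := by
  intro X hX
  obtain ⟨l, hl⟩ := hFcov X hX
  set Y := X ⊔ Fneg l with hYdef
  have hle : Y ≤ X ⊔ Fpos l := sup_le_sup_left (hFsec l) X
  have hY : Y ≠ ⊤ := by
    intro h
    exact hl (h.trans (top_le_iff.mp (h ▸ hle)).symm)
  have hZ : ¬ Fpos l ≤ Y := by
    intro h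
    exact hl (le_antisymm hle (sup_le le_sup_left h))
  obtain ⟨s, hs⟩ := hGstrong Y (Fpos l) hY hZ
  exact ⟨l, s, by simpa [hYdef, sup_assoc] using hs⟩
end

section
/- Let U be a vector space over a field k, let {(F⁻_λ, F⁺_λ)}_{λ∈Λ} be a disjoint family of sections of U, and for each λ ∈ Λ let W_λ be a subspace of U with F⁺_λ = W_λ ⊕ F⁻_λ (i.e., W_λ + F⁻_λ = F⁺_λ and W_λ ∩ F⁻_λ = 0). Then the family of subspaces {W_λ}_{λ∈Λ} is in direct sum (independent): for every λ ∈ Λ, W_λ ∩ Σ_{μ≠λ} W_μ = 0. -/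
/-- If `(F⁻_λ, F⁺_λ)` is a disjoint family of sections of a vector space `U` and for
each `λ` the subspace `W_λ` satisfies `F⁺_λ = W_λ ⊕ F⁻_λ`, then the subspaces `W_λ` are
in direct sum: for every `λ`, `W_λ ∩ Σ_{μ ≠ λ} W_μ = 0`. -/
theorem disjoint_sections_direct_sum {k U : Type} [Field k] [AddCommGroup U] [Module k U]
    {Λ : Type} (Fneg Fpos : Λ → Submodule k U)
    (hsec : ∀ l, Fneg l ≤ Fpos l)
    (hdisj : ∀ l m : Λ, l ≠ m → Fpos l ≤ Fneg m ∨ Fpos m ≤ Fneg l)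
    (W : Λ → Submodule k U)
    (hWsum : ∀ l, W l ⊔ Fneg l = Fpos l) (hWdisj : ∀ l, W l ⊓ Fneg l = ⊥) :
    ∀ l : Λ, W l ⊓ (⨆ m : Λ, ⨆ _ : m ≠ l, W m) = ⊥ := by
  classical
  intro l
  rw [Submodule.eq_bot_iff]
  rintro x ⟨hxW, hxS⟩
  suffices key : ∀ s : Finset Λ, ∀ l : Λ, l ∉ s → ∀ x, x ∈ W l → x ∈ s.sup W → x = 0 by
    obtain ⟨s, hs⟩ := (Submodule.mem_iSup_iff_exists_finset).1 hxS
    refine key (s.erase l) l (Finset.notMem_erase l s) x hxW ?_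
    refine (iSup₂_le fun i hi => ?_ : (⨆ i ∈ s, ⨆ _ : i ≠ l, W i) ≤ (s.erase l).sup W) hs
    rcases eq_or_ne i l with rfl | hil
    · exact iSup_le fun h => absurd rfl h
    · exact iSup_le fun _ => Finset.le_sup (Finset.mem_erase.2 ⟨hil, hi⟩)
  intro s
  induction s using Finset.strongInduction with
  | _ s ih =>
    intro l hls x hxW hxS
    rcases s.eq_empty_or_nonempty with rfl | hne
    · simpa using hxS
    obtain ⟨m0, hm0T, hmax⟩ := (Set.toFinite (↑(insert l s) : Set Λ)).exists_maximalFor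
      Fpos _ ⟨l, by simp⟩
    have hm0T' : m0 ∈ insert l s := by exact_mod_cast hm0T
    have hmax' : ∀ a ∈ insert l s, Fpos a ≤ Fpos m0 := by
      intro a ha
      rcases eq_or_ne a m0 with rfl | hne'
      · exact le_rfl
      · rcases hdisj a m0 hne' with h | h
        · exact h.trans (hsec m0)
        · exact @hmax a (by exact_mod_cast ha) (h.trans (hsec a))
    have hWle : ∀ a ∈ insert l s, a ≠ m0 → W a ≤ Fneg m0 := by
      intro a ha hne'
      rcases hdisj a m0 hne' with h | h
      · exact (le_sup_left.trans (hWsum a).le).trans h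
      · have hWa : W a ≤ Fneg a := (le_sup_left.trans (hWsum a).le).trans ((hmax' a ha).trans h)
        have : W a = ⊥ := by exact le_bot_iff.1 ((le_inf le_rfl hWa).trans (hWdisj a).le)
        rw [this]; exact bot_le
    rcases Finset.mem_insert.1 hm0T' with rfl | hm0s
    · have hsle : s.sup W ≤ Fneg m0 := Finset.sup_le fun a ha =>
        hWle a (Finset.mem_insert_of_mem ha) (fun h => hls (h ▸ ha))
      have hx : x ∈ W m0 ⊓ Fneg m0 := ⟨hxW, hsle hxS⟩
      rw [hWdisj m0] at hx; exact hx
    · have hml : m0 ≠ l := fun h => hls (h ▸ hm0s)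
      have hxF : x ∈ Fneg m0 := hWle l (Finset.mem_insert_self l s) (Ne.symm hml) hxW
      have hsup : s.sup W = W m0 ⊔ (s.erase m0).sup W := by
        conv_lhs => rw [← Finset.insert_erase hm0s]
        rw [Finset.sup_insert]
      rw [hsup] at hxS
      obtain ⟨y, hy, z, hz, hyz⟩ := Submodule.mem_sup.1 hxS
      have hzF : z ∈ Fneg m0 := by
        refine (Finset.sup_le fun a ha => ?_ : (s.erase m0).sup W ≤ Fneg m0) hz
        exact hWle a (Finset.mem_insert_of_mem (Finset.mem_of_mem_erase ha))
          (Finset.ne_of_mem_erase ha)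
      have hy0 : y ∈ W m0 ⊓ Fneg m0 := ⟨hy, by
        have hyx : y = x - z := by rw [← hyz]; abel
        rw [hyx]; exact Submodule.sub_mem _ hxF hzF⟩
      rw [hWdisj m0] at hy0
      have hxz : x = z := by rw [← hyz, hy0]; simp
      exact ih (s.erase m0) (Finset.erase_ssubset hm0s) l
        (fun h => hls (Finset.mem_of_mem_erase h)) x hxW (hxz ▸ hz)
end

section
/- Let M be an exact persistence bimodule over ℝ² and let ε ∈ ℝ² be a nonzero vector with nonnegative coordinates. Define the ε-smoothing M^ε of M by M^ε_t = Im ρ_{t−ε}^t ⊆ M_t for each t ∈ ℝ², with transition maps induced by those of M (for s ≤ t, ρ_s^t maps Im ρ_{s−ε}^s into Im ρ_{t−ε}^t, so restriction is well-defined). Then M^ε is exact: for every s ≤ t in ℝ² the sequence M^ε_s → M^ε_{(t₁,s₂)} ⊕ M^ε_{(s₁,t₂)} → M^ε_t, given by the restricted maps, is exact. -/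
attribute [local instance] Classical.propDecidable
set_option linter.unusedVariables false

variable {P : Type} [Preorder P] {k : Type} [Field k]

/-- **Exactness of smoothings.** Let `M` be an exact persistence bimodule over `ℝ²` and
`ε` a nonzero nonnegative vector. The `ε`-smoothing `M^ε`, with spaces
`M^ε_t = Im ρ_{t−ε}^t` and maps obtained by restricting those of `M` (first conjunct:
the restrictions are well-defined), is exact (second conjunct). -/
theorem smoothing_is_exact {k : Type} [Field k] (M : PersMod (ℝ × ℝ) k)
    (hex : IsExactBimod M) (ε : ℝ × ℝ) (hε0 : 0 ≤ ε) (hεne : ε ≠ 0) :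
    (∀ (u v : ℝ × ℝ) (huv : u ≤ v),
      Submodule.map (M.map huv)
          (LinearMap.range (M.map (show u - ε ≤ u from sub_le_self u hε0)))
        ≤ LinearMap.range (M.map (show v - ε ≤ v from sub_le_self v hε0))) ∧
    (∀ (s t : ℝ × ℝ) (h : s ≤ t),
      ∀ y ∈ LinearMap.range
        (M.map (show (t.1, s.2) - ε ≤ (t.1, s.2) from sub_le_self _ hε0)),
      ∀ z ∈ LinearMap.range
        (M.map (show (s.1, t.2) - ε ≤ (s.1, t.2) from sub_le_self _ hε0)),
      ((M.map (show (t.1, s.2) ≤ t from ⟨le_rfl, h.2⟩) y =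
          M.map (show (s.1, t.2) ≤ t from ⟨h.1, le_rfl⟩) z) ↔
        ∃ x ∈ LinearMap.range (M.map (show s - ε ≤ s from sub_le_self s hε0)),
          M.map (show s ≤ (t.1, s.2) from ⟨h.1, le_rfl⟩) x = y ∧
          M.map (show s ≤ (s.1, t.2) from ⟨le_rfl, h.2⟩) x = z)) := by
  have comp : ∀ {a b c : ℝ × ℝ} (h₁ : a ≤ b) (h₂ : b ≤ c) (x : M.space a),
      M.map h₂ (M.map h₁ x) = M.map (h₁.trans h₂) x := by
    intro a b c h₁ h₂ x
    rw [M.map_trans h₁ h₂]; rfl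
  constructor
  · rintro u v huv x ⟨-, ⟨w, rfl⟩, rfl⟩
    refine ⟨M.map (show u - ε ≤ v - ε from sub_le_sub_right huv ε) w, ?_⟩
    rw [comp, comp]
  · intro s t h y hy z hz
    obtain ⟨y', rfl⟩ := hy
    obtain ⟨z', rfl⟩ := hz
    have hst : s - ε ≤ t := (sub_le_self s hε0).trans h
    have hY : ((t.1, s.2) - ε : ℝ × ℝ) ≤ (t.1, (s - ε).2) :=
      ⟨sub_le_self _ hε0.1, le_rfl⟩
    have hZ : ((s.1, t.2) - ε : ℝ × ℝ) ≤ ((s - ε).1, t.2) :=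
      ⟨le_rfl, sub_le_self _ hε0.2⟩
    constructor
    · intro heq
      have key : M.map (show ((t.1, (s - ε).2) : ℝ × ℝ) ≤ t from ⟨le_rfl, hst.2⟩)
            (M.map hY y')
          = M.map (show (((s - ε).1, t.2) : ℝ × ℝ) ≤ t from ⟨hst.1, le_rfl⟩)
            (M.map hZ z') := by
        rw [comp, comp]
        rw [comp, comp] at heq
        exact heq
      obtain ⟨w, hw1, hw2⟩ := (hex (s - ε) t hst _ _).mp key
      refine ⟨M.map (sub_le_self s hε0) w, ⟨w, rfl⟩, ?_, ?_⟩
      · have h2 := congrArg (M.map (show ((t.1, (s - ε).2) : ℝ × ℝ) ≤ (t.1, s.2) from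
          ⟨le_rfl, sub_le_self _ hε0.2⟩)) hw1
        rw [comp, comp] at h2
        rw [comp]
        exact h2
      · have h2 := congrArg (M.map (show (((s - ε).1, t.2) : ℝ × ℝ) ≤ (s.1, t.2) from
          ⟨sub_le_self _ hε0.1, le_rfl⟩)) hw2
        rw [comp, comp] at h2
        rw [comp]
        exact h2
    · rintro ⟨x, ⟨x', rfl⟩, h1, h2⟩
      rw [← h1, ← h2, comp, comp, comp, comp]
end
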